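/- arXiv:0901.1977 — 4 statements merged into one kernel-verified Lean document; each statement's English description precedes it below -/
import Mathlib

section
/- If x, y are integers with x² − d·y² = 1 (d positive square-free), then w = x² − (xy√(−d))·i − (y²d)·j + (xy√(−d))·k has reduced norm 1 in the quaternion algebra (−1,−1/ℚ(√(−d))), i.e. w·w̄ = 1; hence w is a unit of the ℤ-order (−1,−1/𝔬_K). -/
open Quaternion Complex

/-! Since `s² = -d`, the reduced norm of `w` is `x⁴ - 2d x²y² + d²y⁴ = (x² - d y²)²`, which the Pell
equation makes `1`; then `star w` is a two-sided inverse of `w`. -/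

namespace Quaternion

variable {R : Type*} [CommRing R]

-- Stated through the components: a literal `⟨_, _, _, _⟩ : ℍ[R]` elaborates in a syntactically
-- different `QuaternionAlgebra R (-1) 0 (-1)`, on which `normSq` lemmas fail to rewrite.
theorem normSq_pell_square {a : ℍ[R]} {d x y s : R} (hs : s ^ 2 = -d) (hre : a.re = x ^ 2)
    (hi : a.imI = -(x * y * s)) (hj : a.imJ = -(y ^ 2 * d)) (hk : a.imK = x * y * s) :
    normSq a = (x ^ 2 - d * y ^ 2) ^ 2 := by
  rw [normSq_def', hre, hi, hj, hk]
  linear_combination 2 * x ^ 2 * y ^ 2 * hs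

theorem isUnit_of_normSq_eq_one {a : ℍ[R]} (h : normSq a = 1) : IsUnit a :=
  ⟨⟨a, star a, by rw [self_mul_star, h, coe_one], by rw [star_mul_self, h, coe_one]⟩, rfl⟩

end Quaternion

theorem pell_square_unit_norm_one_general (d : ℕ)
    (x y : ℤ) (hpell : x ^ 2 - (d : ℤ) * y ^ 2 = 1) :
    let s : ℂ := Complex.I * Real.sqrt d
    let w : ℍ[ℂ] := ⟨((x : ℂ)) ^ 2, -((x : ℂ) * (y : ℂ) * s), -((y : ℂ) ^ 2 * (d : ℂ)),
      (x : ℂ) * (y : ℂ) * s⟩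
    w * star w = 1 ∧ IsUnit w := by
  intro s w
  have hs : s ^ 2 = -(d : ℂ) := by
    rw [mul_pow, I_sq, ← ofReal_pow, Real.sq_sqrt d.cast_nonneg, ofReal_natCast, neg_one_mul]
  have hpell' : (x : ℂ) ^ 2 - (d : ℂ) * (y : ℂ) ^ 2 = 1 := by exact_mod_cast hpell
  have hnorm : normSq w = 1 := by
    rw [normSq_pell_square (a := w) hs rfl rfl rfl rfl, hpell', one_pow]
  exact ⟨by rw [self_mul_star, hnorm, coe_one], isUnit_of_normSq_eq_one hnorm⟩

/-- The unit `w = x² - (xy√(-d))·i - (y²d)·j + (xy√(-d))·k` has reduced norm 1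
whenever `x² - d y² = 1`, hence is a unit of the ℤ-order `(-1,-1/𝔬_K)`. -/
theorem pell_square_unit_norm_one (d : ℕ) (hd : 0 < d) (hsf : Squarefree d)
    (x y : ℤ) (hpell : x ^ 2 - (d : ℤ) * y ^ 2 = 1) :
    let s : ℂ := Complex.I * Real.sqrt d
    let w : ℍ[ℂ] := ⟨((x : ℂ)) ^ 2, -((x : ℂ) * (y : ℂ) * s), -((y : ℂ) ^ 2 * (d : ℂ)),
      (x : ℂ) * (y : ℂ) * s⟩
    w * star w = 1 ∧ IsUnit w :=
  pell_square_unit_norm_one_general d x y hpell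
end

section
/- (Ping-Pong Lemma, two generators) Let Ω be a set, h₁, h₂ bijections of Ω, and A_{1,1}, A_{1,−1}, A_{2,1}, A_{2,−1} nonempty pairwise disjoint subsets of Ω such that h_iᵉ(Ω ∖ A_{i,ε}) ⊆ A_{i,−ε} for i ∈ {1,2} and ε ∈ {1,−1} (where h¹ = h, h⁻¹ is the inverse). Then the subgroup of Perm(Ω) generated by h₁ and h₂ is free of rank 2. -/
open Pointwise

/-- Ping-Pong Lemma for two generators: if `h₁, h₂` are bijections of a set `Ω` and
`A₁, A₁', A₂, A₂'` are nonempty pairwise disjoint subsets with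
`h₁(Ω∖A₁) ⊆ A₁'`, `h₁⁻¹(Ω∖A₁') ⊆ A₁`, `h₂(Ω∖A₂) ⊆ A₂'`, `h₂⁻¹(Ω∖A₂') ⊆ A₂`,
then `⟨h₁, h₂⟩ ≤ Perm(Ω)` is free of rank 2, i.e. the lift of the free group on two
generators sending the generators to `h₁, h₂` is injective. -/
theorem ping_pong_lemma {Ω : Type*} (h₁ h₂ : Equiv.Perm Ω)
    (A₁ A₁' A₂ A₂' : Set Ω)
    (hne₁ : A₁.Nonempty) (hne₁' : A₁'.Nonempty) (hne₂ : A₂.Nonempty) (hne₂' : A₂'.Nonempty)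
    (hdisj : [A₁, A₁', A₂, A₂'].Pairwise Disjoint)
    (H11 : h₁ '' A₁ᶜ ⊆ A₁') (H1m1 : ⇑h₁⁻¹ '' A₁'ᶜ ⊆ A₁)
    (H21 : h₂ '' A₂ᶜ ⊆ A₂') (H2m1 : ⇑h₂⁻¹ '' A₂'ᶜ ⊆ A₂) :
    Function.Injective ⇑(FreeGroup.lift (fun b : Bool => if b then h₁ else h₂)) := by
  simp only [List.pairwise_cons, List.mem_cons, List.not_mem_nil] at hdisj
  obtain ⟨h1, h2, h3, -⟩ := hdisj
  have d11' := h1 A₁' (by simp)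
  have d12 := h1 A₂ (by simp)
  have d12' := h1 A₂' (by simp)
  have d1'2 := h2 A₂ (by simp)
  have d1'2' := h2 A₂' (by simp)
  have d22' := h3 A₂' (by simp)
  have key : Function.Injective
      ⇑(FreeGroup.lift (fun b : ULift Bool => if b.down then h₁ else h₂)) := by
    refine FreeGroup.injective_lift_of_ping_pong (α := Ω)
      (fun b : ULift Bool => if b.down then h₁ else h₂)
      (fun b => if b.down then A₁' else A₂') (fun b => if b.down then A₁ else A₂)
      ?_ ?_ ?_ ?_ ?_ ?_
    · intro ⟨b⟩; cases b <;> simpa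
    · intro ⟨i⟩ ⟨j⟩ hij
      cases i <;> cases j <;> simp_all [Function.onFun, Disjoint.symm]
    · intro ⟨i⟩ ⟨j⟩ hij
      cases i <;> cases j <;> simp_all [Function.onFun, Disjoint.symm]
    · intro ⟨i⟩ ⟨j⟩
      cases i <;> cases j <;> simp_all [Disjoint.symm]
    · rintro ⟨b⟩ x hx
      obtain ⟨y, hy, rfl⟩ := Set.mem_smul_set.mp hx
      cases b
      · exact H21 ⟨y, hy, rfl⟩
      · exact H11 ⟨y, hy, rfl⟩
    · rintro ⟨b⟩ x hx
      obtain ⟨y, hy, rfl⟩ := Set.mem_smul_set.mp hx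
      cases b
      · exact H2m1 ⟨y, hy, rfl⟩
      · exact H1m1 ⟨y, hy, rfl⟩
  have comp : (FreeGroup.lift (fun b : Bool => if b then h₁ else h₂)) =
      (FreeGroup.lift (fun b : ULift Bool => if b.down then h₁ else h₂)).comp
        (FreeGroup.freeGroupCongr Equiv.ulift.symm).toMonoidHom := by
    ext b; cases b <;> simp
  rw [comp]
  exact key.comp (FreeGroup.freeGroupCongr Equiv.ulift.symm).injective
end

section
/- Under the standard embedding into M₂(ℂ), the units u = i_K + (−i_K)j + k and w = i_K + i_K j + k of the quaternion algebra over ℚ(√(−1)) map (up to scalar) to matrices inducing the Möbius transformations z ↦ z/(2z+1) and z ↦ z + 2 respectively (after conjugation/normalization as in the paper); consequently ⟨u, w⟩ contains a free group of rank 2, hence the unit group of the order (−1,−1/ℤ[i]) contains a free group of rank 2. -/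
open Quaternion Complex Matrix

/-!
`Ψ` is multiplicative and sends `u` and `w` to `I • [[1,0],[2,1]]` and `I • [[1,2],[0,1]]`,
so a relation between `u` and `w` would give one between the Möbius transformations
`z ↦ z/(2z+1)` and `z ↦ z + 2` of `ℂ ∪ {∞}`. These generate a free group by ping-pong:
`z ↦ z + 2` maps the complement of `Re z ≤ -1` into `{∞} ∪ {Re z > 1}`, and its conjugate
`z ↦ z/(2z+1)` by `z ↦ 1/z` maps the complement of the open disc `|z + 1/2| < 1/2` into the
closed disc `|z - 1/2| ≤ 1/2`; these four sets are pairwise disjoint. Both quaternions are units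
because their reduced norm is `-1`.
-/

/-- The embedding `Ψ(u₁ + u_i i + (u_j + u_k i)j) =
[[u₁ + u_i√(-1), u_j + u_k√(-1)], [-u_j + u_k√(-1), u₁ - u_i√(-1)]]` of the quaternion
algebra over `ℚ(√(-1))` (inside `ℍ[ℂ]`) into `M₂(ℂ)`. -/
def gaussianPsi (q : ℍ[ℂ]) : Matrix (Fin 2) (Fin 2) ℂ :=
  !![q.re + q.imI * Complex.I, q.imJ + q.imK * Complex.I;
     -q.imJ + q.imK * Complex.I, q.re - q.imI * Complex.I]

open Function
open scoped OnePoint Pointwise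

theorem Quaternion.isUnit_of_isUnit_normSq {R : Type*} [CommRing R] {a : ℍ[R]}
    (h : IsUnit (Quaternion.normSq a)) : IsUnit a := by
  obtain ⟨r, hr⟩ := h
  refine ⟨⟨a, (↑r⁻¹ : R) • star a, ?_, ?_⟩, rfl⟩
  · rw [mul_smul_comm, self_mul_star, ← hr, ← coe_smul]; simp
  · rw [smul_mul_assoc, star_mul_self, ← hr, ← coe_smul]; simp

theorem gaussianPsi_mul (p q : ℍ[ℂ]) :
    gaussianPsi (p * q) = gaussianPsi p * gaussianPsi q := by
  ext i j
  fin_cases i <;> fin_cases j <;>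
    simp [gaussianPsi, Matrix.mul_apply] <;> ring_nf <;> simp only [I_sq] <;> ring

def gaussianPsiHom : ℍ[ℂ] →* Matrix (Fin 2) (Fin 2) ℂ where
  toFun := gaussianPsi
  map_one' := by ext i j; fin_cases i <;> fin_cases j <;> simp [gaussianPsi]
  map_mul' := gaussianPsi_mul

theorem Set.inv_smul_set_compl_subset_iff {G α : Type*} [Group G] [MulAction G α] {a : G}
    {s t : Set α} : a⁻¹ • sᶜ ⊆ t ↔ a • tᶜ ⊆ s := by
  rw [Set.smul_set_compl, Set.compl_subset_comm, Set.smul_set_subset_iff_subset_inv_smul_set]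

theorem FreeGroup.injective_lift_of_injective_lift_comp {ι G H : Type*} [Group G] [Group H]
    (f : G →* H) {a : ι → G} (h : Injective (FreeGroup.lift (f ∘ a))) :
    Injective (FreeGroup.lift a) := by
  rw [FreeGroup.ext_hom (FreeGroup.lift (f ∘ a)) (f.comp (FreeGroup.lift a)) (by simp),
    MonoidHom.coe_comp] at h
  exact h.of_comp

namespace Matrix.GeneralLinearGroup

variable {K : Type*} [Field K] {c b : K}

theorem ne_zero_of_coe_eq_smul {n : Type*} [Fintype n] [DecidableEq n] [Nonempty n]
    {g : GL n K} {M : Matrix n n K} (hg : (g : Matrix n n K) = c • M) : c ≠ 0 := by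
  rintro rfl
  exact g.ne_zero (by rw [hg, zero_smul])

variable [DecidableEq K] {g : GL (Fin 2) K}

theorem smul_infty_of_coe_eq_smul_upper
    (hg : (g : Matrix (Fin 2) (Fin 2) K) = c • !![1, b; 0, 1]) :
    g • (∞ : OnePoint K) = ∞ := by
  simp [OnePoint.smul_infty_eq_ite, hg]

theorem smul_coe_of_coe_eq_smul_upper
    (hg : (g : Matrix (Fin 2) (Fin 2) K) = c • !![1, b; 0, 1]) (z : K) :
    g • (z : OnePoint K) = ↑(z + b) := by
  have hc := ne_zero_of_coe_eq_smul hg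
  simp only [OnePoint.smul_some_eq_ite, hg, smul_apply, of_apply, cons_val', cons_val_zero,
    cons_val_fin_one, cons_val_one, smul_eq_mul, mul_zero, zero_mul, mul_one, zero_add, hc,
    ↓reduceIte, OnePoint.some_eq_iff]
  field_simp

theorem smul_infty_of_coe_eq_smul_lower
    (hg : (g : Matrix (Fin 2) (Fin 2) K) = c • !![1, 0; b, 1]) (hb : b ≠ 0) :
    g • (∞ : OnePoint K) = ↑b⁻¹ := by
  have hc := ne_zero_of_coe_eq_smul hg
  simp only [OnePoint.smul_infty_eq_ite, hg, smul_apply, of_apply, cons_val', cons_val_zero,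
    cons_val_fin_one, cons_val_one, smul_eq_mul, mul_eq_zero, hc, hb, or_self, ↓reduceIte,
    mul_one, OnePoint.some_eq_iff]
  field_simp

theorem smul_coe_of_coe_eq_smul_lower
    (hg : (g : Matrix (Fin 2) (Fin 2) K) = c • !![1, 0; b, 1]) {z : K} (hz : b * z + 1 ≠ 0) :
    g • (z : OnePoint K) = ↑(z / (b * z + 1)) := by
  have hc := ne_zero_of_coe_eq_smul hg
  have hden : c * b * z + c ≠ 0 := by rw [mul_assoc, ← mul_add_one]; exact mul_ne_zero hc hz
  simp only [OnePoint.smul_some_eq_ite, hg, smul_apply, of_apply, cons_val', cons_val_zero,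
    cons_val_fin_one, cons_val_one, smul_eq_mul, mul_one, hden, ↓reduceIte, mul_zero, add_zero,
    OnePoint.some_eq_iff]
  field_simp

end Matrix.GeneralLinearGroup

theorem Complex.normSq_div_le_re_div {z : ℂ} (hz : -Complex.normSq z ≤ z.re) :
    Complex.normSq (z / (2 * z + 1)) ≤ (z / (2 * z + 1)).re := by
  rw [Complex.normSq_div, Complex.div_re, ← add_div]
  refine div_le_div_of_nonneg_right ?_ (Complex.normSq_nonneg _)
  rw [Complex.normSq_apply] at hz ⊢
  simp only [Complex.add_re, Complex.mul_re, Complex.add_im, Complex.mul_im, Complex.re_ofNat,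
    Complex.im_ofNat, Complex.one_re, Complex.one_im]
  linarith

/-- `sanovX true` and `sanovY true` are the images under `z ↦ 1/z` of the half-planes
`Re z ≥ 1` and `Re z < -1`. The half-plane `Re z > 1` in `sanovX false` has to be open because
`1 ∈ sanovX true`. -/
def sanovX (b : Bool) : Set (OnePoint ℂ) :=
  cond b ((↑) '' {z : ℂ | Complex.normSq z ≤ z.re})
    (insert ∞ ((↑) '' {z : ℂ | 1 < z.re}))

def sanovY (b : Bool) : Set (OnePoint ℂ) :=
  cond b ((↑) '' {z : ℂ | z.re < -Complex.normSq z}) ((↑) '' {z : ℂ | z.re ≤ -1})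

theorem sanovX_nonempty (b : Bool) : (sanovX b).Nonempty := by
  cases b
  · exact ⟨∞, by simp [sanovX]⟩
  · exact ⟨(0 : ℂ), by simp [sanovX]⟩

theorem pairwise_disjoint_sanovX : Pairwise (Disjoint on sanovX) := by
  refine pairwise_disjoint_on_bool.mpr ?_
  rw [Set.disjoint_insert_right, Set.disjoint_image_iff OnePoint.coe_injective]
  refine ⟨OnePoint.infty_notMem_image_coe, Set.disjoint_left.mpr ?_⟩
  intro z (h₁ : Complex.normSq z ≤ z.re) (h₂ : 1 < z.re)
  nlinarith [Complex.re_sq_le_normSq z]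

theorem pairwise_disjoint_sanovY : Pairwise (Disjoint on sanovY) := by
  refine pairwise_disjoint_on_bool.mpr ?_
  rw [Set.disjoint_image_iff OnePoint.coe_injective]
  refine Set.disjoint_left.mpr ?_
  intro z (h₁ : z.re < -Complex.normSq z) (h₂ : z.re ≤ -1)
  nlinarith [Complex.re_sq_le_normSq z]

theorem disjoint_sanovX_sanovY (b b' : Bool) : Disjoint (sanovX b) (sanovY b') := by
  cases b <;> cases b' <;>
    simp only [sanovX, sanovY, cond_true, cond_false, Set.disjoint_insert_left,
      OnePoint.infty_notMem_image_coe, not_false_eq_true, true_and,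
      Set.disjoint_image_iff OnePoint.coe_injective] <;>
    refine Set.disjoint_left.mpr fun ⦃z⦄ h₁ h₂ => ?_ <;>
    simp only [Set.mem_ofPred_eq] at h₁ h₂ <;>
    nlinarith [Complex.normSq_nonneg z]

theorem smul_compl_sanovY_subset_sanovX {c d : ℂ} {g : Bool → GL (Fin 2) ℂ}
    (htrue : (g true : Matrix (Fin 2) (Fin 2) ℂ) = c • !![1, 0; 2, 1])
    (hfalse : (g false : Matrix (Fin 2) (Fin 2) ℂ) = d • !![1, 2; 0, 1]) (b : Bool) :
    g b • (sanovY b)ᶜ ⊆ sanovX b := by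
  refine Set.smul_set_subset_iff.mpr fun x hx => ?_
  cases b
  · induction x using OnePoint.rec with
    | infty => simp [Matrix.GeneralLinearGroup.smul_infty_of_coe_eq_smul_upper hfalse, sanovX]
    | coe z =>
      have hz : -1 < z.re := by simpa [sanovY] using hx
      simpa [Matrix.GeneralLinearGroup.smul_coe_of_coe_eq_smul_upper hfalse, sanovX]
        using (by linarith : 1 < z.re + 2)
  · induction x using OnePoint.rec with
    | infty =>
      rw [Matrix.GeneralLinearGroup.smul_infty_of_coe_eq_smul_lower htrue two_ne_zero]
      exact Set.mem_image_of_mem _ (by norm_num [Complex.normSq_apply])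
    | coe z =>
      have hz : -Complex.normSq z ≤ z.re := by simpa [sanovY] using hx
      have hden : 2 * z + 1 ≠ 0 := by
        rintro h
        rw [show z = -1 / 2 by linear_combination h / 2] at hz
        norm_num at hz
      rw [Matrix.GeneralLinearGroup.smul_coe_of_coe_eq_smul_lower htrue hden]
      exact Set.mem_image_of_mem _ (Complex.normSq_div_le_re_div hz)

theorem FreeGroup.injective_lift_sanov {c d : ℂ} (g : Bool → GL (Fin 2) ℂ)
    (htrue : (g true : Matrix (Fin 2) (Fin 2) ℂ) = c • !![1, 0; 2, 1])
    (hfalse : (g false : Matrix (Fin 2) (Fin 2) ℂ) = d • !![1, 2; 0, 1]) :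
    Injective (FreeGroup.lift g) :=
  have hX := smul_compl_sanovY_subset_sanovX htrue hfalse
  FreeGroup.injective_lift_of_ping_pong g sanovX sanovY sanovX_nonempty pairwise_disjoint_sanovX
    pairwise_disjoint_sanovY disjoint_sanovX_sanovY hX
    fun b => Set.inv_smul_set_compl_subset_iff.mpr (hX b)

/-- The units `u = i_K - i_K·j + k` and `w = i_K + i_K·j + k` of the quaternion algebra
over `ℚ(√(-1))` map under `Ψ` to `√(-1)·[[1,0],[2,1]]` and `√(-1)·[[1,2],[0,1]]`, which
induce the Möbius transformations `z ↦ z/(2z+1)` and `z ↦ z+2`; consequently `u, w`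
are units generating a free group of rank 2, so the unit group of the order
`(-1,-1/ℤ[i])` contains a free group of rank 2. -/
theorem gaussian_units_free_group :
    let u : ℍ[ℂ] := ⟨Complex.I, 0, -Complex.I, 1⟩
    let w : ℍ[ℂ] := ⟨Complex.I, 0, Complex.I, 1⟩
    gaussianPsi u = Complex.I • !![1, 0; 2, 1] ∧
    gaussianPsi w = Complex.I • !![1, 2; 0, 1] ∧
    ∃ U W : ℍ[ℂ]ˣ, (U : ℍ[ℂ]) = u ∧ (W : ℍ[ℂ]) = w ∧
      Function.Injective ⇑(FreeGroup.lift (fun b : Bool => if b then U else W)) := by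
  intro u w
  have hu : gaussianPsi u = Complex.I • !![1, 0; 2, 1] := by
    ext i j; fin_cases i <;> fin_cases j <;> simp [gaussianPsi, u]; ring
  have hw : gaussianPsi w = Complex.I • !![1, 2; 0, 1] := by
    ext i j; fin_cases i <;> fin_cases j <;> simp [gaussianPsi, w]; ring
  have hu_unit : IsUnit u :=
    Quaternion.isUnit_of_isUnit_normSq (by rw [normSq_def']; norm_num [u])
  have hw_unit : IsUnit w :=
    Quaternion.isUnit_of_isUnit_normSq (by rw [normSq_def']; norm_num [w])
  refine ⟨hu, hw, hu_unit.unit, hw_unit.unit, rfl, rfl, ?_⟩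
  apply FreeGroup.injective_lift_of_injective_lift_comp (Units.map gaussianPsiHom)
  exact FreeGroup.injective_lift_sanov _ (by simpa [gaussianPsiHom] using hu)
    (by simpa [gaussianPsiHom] using hw)
end

section
/- Let h₁(z) = (√2·z + 1)/(z + √2) and h₂(z) = ((1−√2)/(1+√2))·z, Möbius transformations of ℝ ∪ {∞}. For any choice of reals a₂ < a₁ < 0 < b₁ < b₂ with −a₂ > √2, b₂ > √2, −a₁ < 1/√2, b₁ < 1/√2, the sets A_{1,1} = [a₂,a₁], A_{1,−1} = [b₁,b₂], A_{2,1} = [−∞,a₂) ∪ (b₂,∞], A_{2,−1} = (a₁,b₁) fail to satisfy the Ping-Pong conditions: the system of inequalities ((1−√2)/(1+√2))·a₂ < (√2·a₁+1)/(a₁+√2) and (√2·a₂+1)/(a₂+√2) < ((1+√2)/(1−√2))·a₁ has no solution with a₂ < −√2 and a₁ > −1/√2. -/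
/-- For the Möbius maps `h₁(z) = (√2 z + 1)/(z + √2)` and
`h₂(z) = ((1-√2)/(1+√2))z` induced by the units `w = √(-2) + k` and
`u = 1 + √(-2)i` (case `d = 2`), the Ping-Pong conditions fail for every choice of
intervals as in the paper: there are no reals `a₁, a₂` with `a₂ < -√2`,
`-1/√2 < a₁ < 0` satisfying both
`((1-√2)/(1+√2))·a₂ < (√2·a₁+1)/(a₁+√2)` and
`(√2·a₂+1)/(a₂+√2) < ((1+√2)/(1-√2))·a₁`. -/
theorem pingpong_fails_d_two :
    ¬ ∃ a₁ a₂ : ℝ, a₂ < -Real.sqrt 2 ∧ -(1 / Real.sqrt 2) < a₁ ∧ a₁ < 0 ∧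
      ((1 - Real.sqrt 2) / (1 + Real.sqrt 2)) * a₂
          < (Real.sqrt 2 * a₁ + 1) / (a₁ + Real.sqrt 2) ∧
      (Real.sqrt 2 * a₂ + 1) / (a₂ + Real.sqrt 2)
          < ((1 + Real.sqrt 2) / (1 - Real.sqrt 2)) * a₁ := by
  rintro ⟨a₁, a₂, h1, h2, h3, h4, h5⟩
  set s := Real.sqrt 2 with hs_def
  have hs2 : s ^ 2 = 2 := Real.sq_sqrt (by norm_num)
  have hs0 : 0 < s := Real.sqrt_pos.mpr (by norm_num)
  have hs1 : 1 < s := by nlinarith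
  have hp : (0:ℝ) < 1 + s := by linarith
  have hm : 1 - s < 0 := by linarith
  have hinv : s * (1 / s) = 1 := by field_simp
  have hn1 : 0 < s * a₁ + 1 := by
    have := mul_lt_mul_of_pos_left h2 hs0
    nlinarith
  have hd1 : 0 < a₁ + s := by nlinarith
  have hd2 : a₂ + s < 0 := by linarith
  have hn2 : s * a₂ + 1 < 0 := by nlinarith
  -- clear denominators
  have P1 : (1 - s) * a₂ * (a₁ + s) < (s * a₁ + 1) * (1 + s) := by
    rw [div_mul_eq_mul_div, div_lt_div_iff₀ hp hd1] at h4
    linarith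
  have P2 : (s * a₂ + 1) * (1 - s) < (1 + s) * a₁ * (a₂ + s) := by
    rw [div_lt_iff_of_neg hd2, div_mul_eq_mul_div, div_mul_eq_mul_div,
      div_lt_iff_of_neg hm] at h5
    linarith
  -- exact polynomial identities (modulo s² = 2)
  have id1 : (1 - s) * a₂ * (a₁ + s) * ((s * a₂ + 1) * (1 - s)) + (a₁ + s) * (a₂ + s)
      = s * (1 - s) ^ 2 * (a₁ + s) * (a₂ + 1 + s) ^ 2 := by
    linear_combination (-s^4 - s^3*a₁ - 2*s^3*a₂ + 2*s^2*a₂ - 2*s^2*a₁*a₂ - s*a₂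
      + 2*s*a₁*a₂ - a₁*a₂) * hs2
  have id2 : (s * a₁ + 1) * (1 + s) * ((1 + s) * a₁ * (a₂ + s)) + (a₁ + s) * (a₂ + s)
      = s * (1 + s) ^ 2 * (a₂ + s) * (a₁ + s - 1) ^ 2 := by
    linear_combination (-s^4 - s^3*a₂ - 2*s^3*a₁ - 2*s^2*a₁ - 2*s^2*a₁*a₂ - s*a₁
      - 2*s*a₁*a₂ - a₁*a₂) * hs2
  have hB : 0 ≤ s * (1 - s) ^ 2 * (a₁ + s) * (a₂ + 1 + s) ^ 2 :=
    mul_nonneg (mul_nonneg (mul_nonneg hs0.le (sq_nonneg _)) hd1.le) (sq_nonneg _)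
  have hC : s * (1 + s) ^ 2 * (a₂ + s) * (a₁ + s - 1) ^ 2 ≤ 0 := by
    have h := mul_nonneg (mul_nonneg hs0.le (sq_nonneg (1 + s))) (sq_nonneg (a₁ + s - 1))
    have h' : (s * (1 + s) ^ 2 * (a₁ + s - 1) ^ 2) * (a₂ + s) ≤ 0 :=
      mul_nonpos_of_nonneg_of_nonpos h hd2.le
    calc s * (1 + s) ^ 2 * (a₂ + s) * (a₁ + s - 1) ^ 2
        = (s * (1 + s) ^ 2 * (a₁ + s - 1) ^ 2) * (a₂ + s) := by ring
      _ ≤ 0 := h'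
  have hA1 : 0 ≤ (1 - s) * a₂ * (a₁ + s) := by
    have h := mul_nonneg (mul_nonneg (by linarith : (0:ℝ) ≤ s - 1)
      (by linarith : (0:ℝ) ≤ -a₂)) hd1.le
    calc (0:ℝ) ≤ (s - 1) * -a₂ * (a₁ + s) := h
      _ = (1 - s) * a₂ * (a₁ + s) := by ring
  have hA2 : 0 ≤ (s * a₂ + 1) * (1 - s) := by
    have h := mul_nonneg (by linarith : (0:ℝ) ≤ -(s * a₂ + 1)) (by linarith : (0:ℝ) ≤ s - 1)
    calc (0:ℝ) ≤ -(s * a₂ + 1) * (s - 1) := h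
      _ = (s * a₂ + 1) * (1 - s) := by ring
  have hprod : (1 - s) * a₂ * (a₁ + s) * ((s * a₂ + 1) * (1 - s))
      < (s * a₁ + 1) * (1 + s) * ((1 + s) * a₁ * (a₂ + s)) :=
    mul_lt_mul'' P1 P2 hA1 hA2
  linarith [hprod, id1 ▸ hB, id2 ▸ hC]
end
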